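/- arXiv:1110.1214 — 2 statements merged into one kernel-verified Lean document; each statement's English description precedes it below -/
import Mathlib

section
/- For any random variable X and any positive random variable M with E[M] = 1, Jensen's inequality gives −(1/α)·log E[e^{−αX}] ≤ E_Q[X] + (1/α)·E[M·log M], where Q is the probability with density M with respect to P and α > 0. -/
/-!
Under `Q = M • P`, apply Jensen's inequality for the convex function `exp` to `Y - log M`:
`exp (E_Q[Y] - E_Q[log M]) ≤ E_Q[exp Y / M] = E_P[exp Y]`. Since `E_Q[log M] = E_P[M log M]`,
this is the Donsker–Varadhan bound `E_Q[Y] - KL(Q ‖ P) ≤ log E_P[exp Y]`, and `Y = -α X`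
gives the theorem after dividing by `α`.
-/

open MeasureTheory Real

section

variable {Ω : Type*} [MeasurableSpace Ω] {P : Measure Ω} {M : Ω → ℝ}

theorem integral_le_log_integral_exp [IsProbabilityMeasure P] {f : Ω → ℝ} (hf : Integrable f P)
    (hef : Integrable (fun ω => exp (f ω)) P) :
    ∫ ω, f ω ∂P ≤ log (∫ ω, exp (f ω) ∂P) := by
  rw [← exp_le_exp, exp_log (integral_exp_pos hef)]
  exact convexOn_exp.map_integral_le continuous_exp.continuousOn isClosed_univ (by simp) hf hef

theorem integral_withDensity_ofReal {E : Type*} [NormedAddCommGroup E] [NormedSpace ℝ E]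
    (hM : AEMeasurable M P) (hM0 : 0 ≤ᵐ[P] M) (g : Ω → E) :
    ∫ ω, g ω ∂P.withDensity (fun ω => ENNReal.ofReal (M ω)) = ∫ ω, M ω • g ω ∂P := by
  rw [integral_withDensity_eq_integral_toReal_smul₀ hM.ennreal_ofReal
    (ae_of_all _ fun _ => ENNReal.ofReal_lt_top)]
  refine integral_congr_ae ?_
  filter_upwards [hM0] with ω hω
  rw [ENNReal.toReal_ofReal hω]

theorem integrable_withDensity_ofReal_iff {E : Type*} [NormedAddCommGroup E] [NormedSpace ℝ E]
    (hM : AEMeasurable M P) (hM0 : 0 ≤ᵐ[P] M) {g : Ω → E} :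
    Integrable g (P.withDensity (fun ω => ENNReal.ofReal (M ω))) ↔
      Integrable (fun ω => M ω • g ω) P := by
  rw [integrable_withDensity_iff_integrable_smul₀' hM.ennreal_ofReal
    (ae_of_all _ fun _ => ENNReal.ofReal_lt_top)]
  refine integrable_congr ?_
  filter_upwards [hM0] with ω hω
  rw [ENNReal.toReal_ofReal hω]

theorem isProbabilityMeasure_withDensity_ofReal (hM : Integrable M P) (hM0 : 0 ≤ᵐ[P] M)
    (hM1 : ∫ ω, M ω ∂P = 1) :
    IsProbabilityMeasure (P.withDensity (fun ω => ENNReal.ofReal (M ω))) := by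
  constructor
  rw [withDensity_apply _ MeasurableSet.univ, setLIntegral_univ,
    ← ofReal_integral_eq_lintegral_ofReal hM hM0, hM1, ENNReal.ofReal_one]

theorem integral_sub_integral_mul_log_le_log_integral_exp [IsProbabilityMeasure P]
    (hMpos : ∀ᵐ ω ∂P, 0 < M ω) (hM1 : ∫ ω, M ω ∂P = 1) {Y : Ω → ℝ}
    (hY : Integrable Y (P.withDensity (fun ω => ENNReal.ofReal (M ω))))
    (hMlogM : Integrable (fun ω => M ω * log (M ω)) P)
    (hexpY : Integrable (fun ω => exp (Y ω)) P) :
    ∫ ω, Y ω ∂P.withDensity (fun ω => ENNReal.ofReal (M ω)) - ∫ ω, M ω * log (M ω) ∂P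
      ≤ log (∫ ω, exp (Y ω) ∂P) := by
  set Q := P.withDensity (fun ω => ENNReal.ofReal (M ω))
  have hMint : Integrable M P := .of_integral_ne_zero (by rw [hM1]; exact one_ne_zero)
  have hMm := hMint.aemeasurable
  have hM0 : 0 ≤ᵐ[P] M := hMpos.mono fun _ h => h.le
  have := isProbabilityMeasure_withDensity_ofReal hMint hM0 hM1
  have hexp_eq : (fun ω => M ω • exp (Y ω - log (M ω))) =ᵐ[P] fun ω => exp (Y ω) := by
    filter_upwards [hMpos] with ω hω
    rw [smul_eq_mul, exp_sub, exp_log hω, mul_div_cancel₀ _ hω.ne']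
  have hlogM : Integrable (fun ω => log (M ω)) Q :=
    (integrable_withDensity_ofReal_iff hMm hM0).2 hMlogM
  have hexpQ : Integrable (fun ω => exp (Y ω - log (M ω))) Q :=
    (integrable_withDensity_ofReal_iff hMm hM0).2 (hexpY.congr hexp_eq.symm)
  calc ∫ ω, Y ω ∂Q - ∫ ω, M ω * log (M ω) ∂P
      = ∫ ω, (Y ω - log (M ω)) ∂Q := by
        rw [integral_sub hY hlogM, integral_withDensity_ofReal hMm hM0 fun ω => log (M ω)]
        rfl
    _ ≤ log (∫ ω, exp (Y ω - log (M ω)) ∂Q) := integral_le_log_integral_exp (hY.sub hlogM) hexpQ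
    _ = log (∫ ω, exp (Y ω) ∂P) := by
        rw [integral_withDensity_ofReal hMm hM0, integral_congr_ae hexp_eq]

end

theorem stmt_16_general {Ω : Type*} [MeasurableSpace Ω] (P : Measure Ω) [IsProbabilityMeasure P]
    (α : ℝ) (hα : 0 < α)
    (X M : Ω → ℝ)
    (hMpos : ∀ᵐ ω ∂P, 0 < M ω)
    (hM1 : ∫ ω, M ω ∂P = 1)
    (Q : Measure Ω) (hQ : Q = P.withDensity (fun ω => ENNReal.ofReal (M ω)))
    (hint1 : Integrable (fun ω => Real.exp (-α * X ω)) P)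
    (hint2 : Integrable (fun ω => M ω * Real.log (M ω)) P)
    (hint3 : Integrable X Q) :
    -(1/α) * Real.log (∫ ω, Real.exp (-α * X ω) ∂P)
      ≤ (∫ ω, X ω ∂Q) + (1/α) * ∫ ω, M ω * Real.log (M ω) ∂P := by
  have h := integral_sub_integral_mul_log_le_log_integral_exp hMpos hM1
    (hQ ▸ hint3.const_mul (-α)) hint2 hint1
  rw [← hQ, integral_const_mul] at h
  have hαα : α * (1 / α) = 1 := mul_one_div_cancel hα.ne'
  linear_combination (1 / α) * h + (∫ ω, X ω ∂Q) * hαα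

/-- For any random variable `X` and positive `M` with `E[M] = 1`,
Jensen's inequality gives
`-(1/α) log E[e^{-αX}] ≤ E_Q[X] + (1/α) E[M log M]`, where `dQ/dP = M`. -/
theorem stmt_16 {Ω : Type*} [MeasurableSpace Ω] (P : Measure Ω) [IsProbabilityMeasure P]
    (α : ℝ) (hα : 0 < α)
    (X M : Ω → ℝ) (hXm : Measurable X) (hMm : Measurable M)
    (hMpos : ∀ᵐ ω ∂P, 0 < M ω)
    (hM1 : ∫ ω, M ω ∂P = 1)
    (Q : Measure Ω) (hQ : Q = P.withDensity (fun ω => ENNReal.ofReal (M ω)))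
    (hint1 : Integrable (fun ω => Real.exp (-α * X ω)) P)
    (hint2 : Integrable (fun ω => M ω * Real.log (M ω)) P)
    (hint3 : Integrable X Q) :
    -(1/α) * Real.log (∫ ω, Real.exp (-α * X ω) ∂P)
      ≤ (∫ ω, X ω ∂Q) + (1/α) * ∫ ω, M ω * Real.log (M ω) ∂P :=
  stmt_16_general P α hα X M hMpos hM1 Q hQ hint1 hint2 hint3
end

section
/- With r(ε) = u(ε)/l(ε) where l = (μ̄−λ̄)/α, u = (μ̄+λ̄)/((1−ε)α), and λ̄ = (3μ̄²/4)^{1/3}·ε^{1/3} + O(ε), the relative turnover ShT(ε) = (σ²/2)·[(1−2μ̄)/(r^{1−2μ̄}−1) + (2μ̄−1)/(r^{2μ̄−1}−1)] satisfies ShT(ε) = (σ²/2)·μ̄·(3μ̄²/4)^{−1/3}·ε^{−1/3} + O(ε^{1/3}) as ε ↓ 0. -/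
open Real Filter Asymptotics Topology

/-!
Put `a = 1 - 2μ̄` and `ρ = r - 1`. The bracket is `a coth (a log r / 2)`, so the expansions
`x coth x = 1 + O(x²)` and `2 / log (1 + ρ) = 2 / ρ + 1 + O(ρ)` turn it into
`(r + 1) / (r - 1) + O(ρ)`. Since `λ̄ = c ε^{1/3} + O(ε)` with `c = (3μ̄²/4)^{1/3}`,
the width `ρ` is of order `ε^{1/3}`, and
`(r + 1) / (r - 1) = (2μ̄ - ε (μ̄ - λ̄)) / (2λ̄ + ε (μ̄ - λ̄)) = μ̄ / (c ε^{1/3}) + O(ε^{1/3})`.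
-/

lemma abs_mul_exp_add_one_div_exp_sub_one_sub_two_le {s : ℝ} (hs0 : s ≠ 0) (hs : |s| ≤ 1 / 2) :
    |s * (exp s + 1) / (exp s - 1) - 2| ≤ 3 * s ^ 2 := by
  have hs1 : |s| ≤ 1 := by linarith
  have hsq : s ^ 2 ≤ |s| / 2 := by
    rw [← sq_abs]; nlinarith [abs_nonneg s]
  have hden : |s| / 2 ≤ |exp s - 1| := by
    have hlin := abs_exp_sub_one_sub_id_le hs1
    have htri := abs_sub (exp s - 1) (exp s - 1 - s)
    rw [sub_sub_cancel] at htri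
    linarith
  have hden0 : exp s - 1 ≠ 0 := by
    intro h; rw [h, abs_zero] at hden; linarith [abs_pos.mpr hs0]
  have hcubic : |exp s - (1 + s + s ^ 2 / 2)| ≤ |s| ^ 3 * (2 / 9) := by
    have h := exp_bound hs1 (n := 3) (by norm_num)
    norm_num [Finset.sum_range_succ, Nat.factorial] at h
    convert h using 2
  -- the Taylor polynomial `1 + s + s²/2` makes the numerator cancel up to order three
  have hnum : |s * (exp s + 1) - 2 * (exp s - 1)| ≤ 3 / 2 * |s| ^ 3 := by
    have hs2 : |s - 2| ≤ 5 / 2 := by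
      rw [abs_le] at hs ⊢; constructor <;> linarith
    calc |s * (exp s + 1) - 2 * (exp s - 1)|
        = |s ^ 3 / 2 + (s - 2) * (exp s - (1 + s + s ^ 2 / 2))| := by ring_nf
      _ ≤ |s| ^ 3 / 2 + 5 / 2 * (|s| ^ 3 * (2 / 9)) := by
        refine (abs_add_le _ _).trans (add_le_add (by rw [abs_div, abs_pow]; norm_num) ?_)
        rw [abs_mul]; gcongr
      _ ≤ 3 / 2 * |s| ^ 3 := by nlinarith [pow_nonneg (abs_nonneg s) 3]
  rw [show s * (exp s + 1) / (exp s - 1) - 2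
      = (s * (exp s + 1) - 2 * (exp s - 1)) / (exp s - 1) by field_simp,
    abs_div, div_le_iff₀ (abs_pos.mpr hden0)]
  calc |s * (exp s + 1) - 2 * (exp s - 1)| ≤ 3 / 2 * |s| ^ 3 := hnum
    _ = 3 * s ^ 2 * (|s| / 2) := by rw [← sq_abs s]; ring
    _ ≤ 3 * s ^ 2 * |exp s - 1| := by gcongr

lemma abs_two_div_log_one_add_sub_le {p : ℝ} (hp0 : 0 < p) (hp : p ≤ 1 / 2) :
    |2 / log (1 + p) - (2 / p + 1)| ≤ 22 * p := by
  have hE : |log (1 + p) - (p - p ^ 2 / 2)| ≤ 2 * p ^ 3 := by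
    have h := abs_log_sub_add_sum_range_le (x := -p) (by rw [abs_neg, abs_of_pos hp0]; linarith) 2
    rw [abs_neg, abs_of_pos hp0, sub_neg_eq_add] at h
    norm_num [Finset.sum_range_succ] at h
    calc |log (1 + p) - (p - p ^ 2 / 2)| = |-p + p ^ 2 / 2 + log (1 + p)| := by ring_nf
      _ ≤ p ^ 3 / (1 - p) := h
      _ ≤ 2 * p ^ 3 := by
        rw [div_le_iff₀ (by linarith)]; nlinarith [pow_pos hp0 3]
  have hL : p / 4 ≤ log (1 + p) := by
    nlinarith [(abs_le.mp hE).1, pow_pos hp0 3]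
  have hL0 : 0 < log (1 + p) := by linarith
  have hnum : |2 * p - (2 + p) * log (1 + p)| ≤ 11 / 2 * p ^ 3 := by
    calc |2 * p - (2 + p) * log (1 + p)|
        = |p ^ 3 / 2 - (2 + p) * (log (1 + p) - (p - p ^ 2 / 2))| := by ring_nf
      _ ≤ p ^ 3 / 2 + 5 / 2 * (2 * p ^ 3) := by
        refine (abs_sub _ _).trans (add_le_add (by rw [abs_of_pos (by positivity)]) ?_)
        rw [abs_mul, abs_of_pos (by linarith : 0 < 2 + p)]
        gcongr; linarith
      _ = 11 / 2 * p ^ 3 := by ring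
  rw [show 2 / log (1 + p) - (2 / p + 1)
      = (2 * p - (2 + p) * log (1 + p)) / (p * log (1 + p)) by field_simp,
    abs_div, abs_of_pos (mul_pos hp0 hL0), div_le_iff₀ (mul_pos hp0 hL0)]
  calc _ ≤ 11 / 2 * p ^ 3 := hnum
    _ ≤ 22 * p * (p * (p / 4)) := by nlinarith [pow_pos hp0 3]
    _ ≤ 22 * p * (p * log (1 + p)) := by gcongr

/-- The bracket of `ShT`, with `a = 1 - 2μ̄`. -/
noncomputable def turnoverBracket (a x : ℝ) : ℝ :=
  a / (x ^ a - 1) + -a / (x ^ (-a) - 1)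

lemma turnoverBracket_eq {x : ℝ} (hx : 0 < x) (a : ℝ) :
    turnoverBracket a x = a * (x ^ a + 1) / (x ^ a - 1) := by
  have hR : 0 < x ^ a := rpow_pos_of_pos hx a
  rw [turnoverBracket, rpow_neg hx.le]
  rcases eq_or_ne (x ^ a) 1 with h | h
  · simp [h]
  · have h' : x ^ a - 1 ≠ 0 := sub_ne_zero.mpr h
    have h'' : (x ^ a)⁻¹ - 1 ≠ 0 := by
      rwa [sub_ne_zero, inv_ne_one]
    field_simp
    ring

lemma abs_turnoverBracket_one_add_sub_le {a p : ℝ} (ha : a ≠ 0) (hp0 : 0 < p)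
    (hp : (|a| + 1) * p ≤ 1 / 2) :
    |turnoverBracket a (1 + p) - (2 / p + 1)| ≤ (3 * a ^ 2 + 22) * p := by
  set t := log (1 + p)
  have ht0 : 0 < t := log_pos (by linarith)
  have htp : t ≤ p := by linarith [log_le_sub_one_of_pos (by linarith : 0 < 1 + p)]
  have hat : |a * t| ≤ 1 / 2 := by
    rw [abs_mul, abs_of_pos ht0]; nlinarith [abs_nonneg a]
  have hcoth : |a * (exp (a * t) + 1) / (exp (a * t) - 1) - 2 / t| ≤ 3 * a ^ 2 * p := by
    rw [show a * (exp (a * t) + 1) / (exp (a * t) - 1) - 2 / t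
        = (a * t * (exp (a * t) + 1) / (exp (a * t) - 1) - 2) / t by field_simp,
      abs_div, abs_of_pos ht0, div_le_iff₀ ht0]
    calc _ ≤ 3 * (a * t) ^ 2 :=
          abs_mul_exp_add_one_div_exp_sub_one_sub_two_le (mul_ne_zero ha ht0.ne') hat
      _ = 3 * a ^ 2 * t * t := by ring
      _ ≤ 3 * a ^ 2 * p * t := by gcongr
  have hlog := abs_two_div_log_one_add_sub_le hp0 (by nlinarith [abs_nonneg a])
  rw [turnoverBracket_eq (by linarith), rpow_def_of_pos (by linarith), mul_comm (log (1 + p))]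
  change |a * (exp (a * t) + 1) / (exp (a * t) - 1) - (2 / p + 1)| ≤ _
  calc _ = |(a * (exp (a * t) + 1) / (exp (a * t) - 1) - 2 / t) + (2 / t - (2 / p + 1))| := by
        ring_nf
    _ ≤ 3 * a ^ 2 * p + 22 * p := (abs_add_le _ _).trans (add_le_add hcoth hlog)
    _ = (3 * a ^ 2 + 22) * p := by ring

lemma turnoverBracket_one_add_sub_isBigO {ι : Type*} {l : Filter ι} {a : ℝ} (ha : a ≠ 0)
    {p : ι → ℝ} (hp : Tendsto p l (𝓝[>] 0)) :
    (fun i => turnoverBracket a (1 + p i) - (2 / p i + 1)) =O[l] p := by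
  refine IsBigO.of_bound (3 * a ^ 2 + 22) ?_
  filter_upwards [hp (Ioo_mem_nhdsGT (show (0 : ℝ) < 1 / (2 * (|a| + 1)) by positivity))]
    with i ⟨hi0, hi⟩
  rw [lt_div_iff₀ (by positivity)] at hi
  rw [norm_eq_abs, norm_eq_abs, abs_of_pos hi0]
  exact abs_turnoverBracket_one_add_sub_le ha hi0 (by linarith)

lemma tendsto_rpow_nhdsGT_zero {q : ℝ} (hq : 0 < q) :
    Tendsto (fun x : ℝ => x ^ q) (𝓝[>] 0) (𝓝 0) :=
  ((continuous_rpow_const hq.le).tendsto' 0 0 (zero_rpow hq.ne')).mono_left nhdsWithin_le_nhds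

lemma rpow_one_third_pow_three {x : ℝ} (hx : 0 ≤ x) : (x ^ ((1 : ℝ) / 3)) ^ 3 = x := by
  rw [one_div]; exact_mod_cast rpow_inv_natCast_pow hx (n := 3) (by norm_num)

lemma tendsto_div_rpow_one_third_nhdsGT :
    Tendsto (fun x : ℝ => x / x ^ ((1 : ℝ) / 3)) (𝓝[>] 0) (𝓝 0) := by
  refine (tendsto_rpow_nhdsGT_zero (q := 2 / 3) (by norm_num)).congr' ?_
  filter_upwards [self_mem_nhdsWithin] with x (hx : 0 < x)
  rw [← rpow_one_sub' hx.le (by norm_num)]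
  norm_num

lemma tendsto_nhds_zero_of_div_rpow_one_third {c : ℝ} {f : ℝ → ℝ}
    (hf : Tendsto (fun ε => f ε / ε ^ ((1 : ℝ) / 3)) (𝓝[>] 0) (𝓝 c)) :
    Tendsto f (𝓝[>] 0) (𝓝 0) := by
  have h := hf.mul (tendsto_rpow_nhdsGT_zero (q := 1 / 3) (by norm_num))
  rw [mul_zero] at h
  refine h.congr' ?_
  filter_upwards [self_mem_nhdsWithin] with ε (hε : 0 < ε)
  exact div_mul_cancel₀ _ (rpow_pos_of_pos hε _).ne'

section NoTradeRegion

variable {μ c : ℝ} {lam : ℝ → ℝ}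

/-- `α (1 - ε) (u ε - l ε)`. -/
def width (μ : ℝ) (lam : ℝ → ℝ) (ε : ℝ) : ℝ :=
  2 * lam ε + ε * (μ - lam ε)

/-- `r ε - 1 = (u ε - l ε) / l ε`. -/
noncomputable def relWidth (μ : ℝ) (lam : ℝ → ℝ) (ε : ℝ) : ℝ :=
  width μ lam ε / ((1 - ε) * (μ - lam ε))

lemma div_div_eq_one_add_relWidth {α ε : ℝ} (hα : α ≠ 0) (hε : ε ≠ 1) (hlam : lam ε ≠ μ) :
    (μ + lam ε) / ((1 - ε) * α) / ((μ - lam ε) / α) = 1 + relWidth μ lam ε := by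
  have : 1 - ε ≠ 0 := sub_ne_zero.mpr hε.symm
  have : μ - lam ε ≠ 0 := sub_ne_zero.mpr hlam.symm
  rw [relWidth, width]
  field_simp
  ring

lemma tendsto_div_rpow_one_third_of_isBigO
    (hlam : (fun ε => lam ε - c * ε ^ ((1 : ℝ) / 3)) =O[𝓝[>] 0] fun ε => ε) :
    Tendsto (fun ε => lam ε / ε ^ ((1 : ℝ) / 3)) (𝓝[>] 0) (𝓝 c) := by
  have h : Tendsto (fun ε => (lam ε - c * ε ^ ((1 : ℝ) / 3)) / ε ^ ((1 : ℝ) / 3))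
      (𝓝[>] 0) (𝓝 0) :=
    (hlam.mul (isBigO_refl (fun ε : ℝ => (ε ^ ((1 : ℝ) / 3))⁻¹) _)).trans_tendsto
      tendsto_div_rpow_one_third_nhdsGT
  have h' := h.add_const c
  rw [zero_add] at h'
  refine h'.congr' ?_
  filter_upwards [self_mem_nhdsWithin] with ε (hε : 0 < ε)
  field_simp [(rpow_pos_of_pos hε ((1 : ℝ) / 3)).ne']
  ring

lemma tendsto_width_div_rpow_one_third
    (hlim : Tendsto (fun ε => lam ε / ε ^ ((1 : ℝ) / 3)) (𝓝[>] 0) (𝓝 c)) :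
    Tendsto (fun ε => width μ lam ε / ε ^ ((1 : ℝ) / 3)) (𝓝[>] 0) (𝓝 (2 * c)) := by
  have h := (hlim.const_mul 2).add (tendsto_div_rpow_one_third_nhdsGT.mul
    (tendsto_const_nhds (x := μ) |>.sub (tendsto_nhds_zero_of_div_rpow_one_third hlim)))
  rw [zero_mul, add_zero] at h
  refine h.congr fun ε => ?_
  rw [width]
  ring

lemma tendsto_relWidth_div_rpow_one_third (hμ : μ ≠ 0)
    (hlim : Tendsto (fun ε => lam ε / ε ^ ((1 : ℝ) / 3)) (𝓝[>] 0) (𝓝 c)) :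
    Tendsto (fun ε => relWidth μ lam ε / ε ^ ((1 : ℝ) / 3)) (𝓝[>] 0) (𝓝 (2 * c / μ)) := by
  have hW := ((tendsto_const_nhds (x := (1 : ℝ))).sub
      (tendsto_id.mono_left nhdsWithin_le_nhds)).mul
      ((tendsto_const_nhds (x := μ)).sub (tendsto_nhds_zero_of_div_rpow_one_third hlim))
  rw [sub_zero, sub_zero, one_mul] at hW
  refine ((tendsto_width_div_rpow_one_third (μ := μ) hlim).div hW hμ).congr fun ε => ?_
  simp only [Pi.div_apply, id, relWidth, div_right_comm]

lemma relWidth_isBigO (hμ : μ ≠ 0)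
    (hlim : Tendsto (fun ε => lam ε / ε ^ ((1 : ℝ) / 3)) (𝓝[>] 0) (𝓝 c)) :
    relWidth μ lam =O[𝓝[>] 0] fun ε => ε ^ ((1 : ℝ) / 3) := by
  refine isBigO_of_div_tendsto_nhds ?_ _ (tendsto_relWidth_div_rpow_one_third hμ hlim)
  filter_upwards [self_mem_nhdsWithin] with ε (hε : 0 < ε) h
  exact absurd h (rpow_pos_of_pos hε _).ne'

lemma tendsto_relWidth (hμ : μ ≠ 0)
    (hlim : Tendsto (fun ε => lam ε / ε ^ ((1 : ℝ) / 3)) (𝓝[>] 0) (𝓝 c))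
    (hsmall : ∀ᶠ ε in 𝓝[>] 0, 0 < lam ε ∧ lam ε < μ) :
    Tendsto (relWidth μ lam) (𝓝[>] 0) (𝓝[>] 0) := by
  refine tendsto_nhdsWithin_iff.mpr
    ⟨tendsto_nhds_zero_of_div_rpow_one_third (tendsto_relWidth_div_rpow_one_third hμ hlim), ?_⟩
  filter_upwards [hsmall, Ioo_mem_nhdsGT one_pos] with ε ⟨hlam0, hlamμ⟩ ⟨hε0, hε1⟩
  have : 0 < μ - lam ε := by linarith
  exact div_pos (by rw [width]; positivity) (mul_pos (by linarith) this)

lemma two_div_relWidth_add_one_sub_isBigO (hc : c ≠ 0)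
    (hlam : (fun ε => lam ε - c * ε ^ ((1 : ℝ) / 3)) =O[𝓝[>] 0] fun ε => ε) :
    (fun ε => 2 / relWidth μ lam ε + 1 - μ / (c * ε ^ ((1 : ℝ) / 3)))
      =O[𝓝[>] 0] fun ε => ε ^ ((1 : ℝ) / 3) := by
  set δ : ℝ → ℝ := fun ε => ε ^ ((1 : ℝ) / 3)
  have hlim := tendsto_div_rpow_one_third_of_isBigO hlam
  have hwidth := tendsto_width_div_rpow_one_third (μ := μ) hlim
  -- the numerator of `2 / relWidth + 1 - μ / (c δ)` over the denominator `c δ width`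
  have hnum : (fun ε => 2 * μ * (c * δ ε - lam ε) - ε * ((μ - lam ε) * (c * δ ε + μ)))
      =O[𝓝[>] 0] fun ε => ε := by
    have hbdd : Tendsto (fun ε => (μ - lam ε) * (c * δ ε + μ)) (𝓝[>] 0)
        (𝓝 ((μ - 0) * (c * 0 + μ))) :=
      (tendsto_const_nhds.sub (tendsto_nhds_zero_of_div_rpow_one_third hlim)).mul
        ((tendsto_rpow_nhdsGT_zero (by norm_num)).const_mul c |>.add_const μ)
    have h := (isBigO_refl (fun ε : ℝ => ε) _).mul (hbdd.isBigO_one ℝ)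
    rw [funext fun ε : ℝ => mul_one ε] at h
    refine ((hlam.const_mul_left (-(2 * μ))).sub h).congr_left fun ε => ?_
    ring
  have hden : (fun ε => (c * δ ε * width μ lam ε)⁻¹) =O[𝓝[>] 0] fun ε => (δ ε ^ 2)⁻¹ := by
    refine isBigO_of_div_tendsto_nhds ?_ (c * (2 * c))⁻¹ (((hwidth.const_mul c).inv₀
      (mul_ne_zero hc (mul_ne_zero two_ne_zero hc))).congr' ?_)
    · filter_upwards [self_mem_nhdsWithin] with ε (hε : 0 < ε) h
      exact absurd h (inv_ne_zero (pow_ne_zero 2 (rpow_pos_of_pos hε _).ne'))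
    · filter_upwards [self_mem_nhdsWithin] with ε (hε : 0 < ε)
      have := (rpow_pos_of_pos hε ((1 : ℝ) / 3)).ne'
      simp only [Pi.div_apply, δ]
      field_simp
  refine (hnum.mul hden).congr' ?_ ?_
  · filter_upwards [self_mem_nhdsWithin, hwidth.eventually_ne (mul_ne_zero two_ne_zero hc)]
      with ε (hε : 0 < ε) hwidth0
    have hδ0 := (rpow_pos_of_pos hε ((1 : ℝ) / 3)).ne'
    have hw0 : width μ lam ε ≠ 0 := fun h => hwidth0 (by rw [h, zero_div])
    rw [width] at hw0
    simp only [relWidth, width, δ]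
    field_simp
    ring
  · filter_upwards [self_mem_nhdsWithin] with ε (hε : 0 < ε)
    have hδ0 := (rpow_pos_of_pos hε ((1 : ℝ) / 3)).ne'
    simp only [δ]
    nth_rewrite 1 [← rpow_one_third_pow_three hε.le]
    field_simp

end NoTradeRegion

theorem stmt_19_general (σ α μ : ℝ) (hα : 0 < α) (hμ : 0 < μ) (hμ' : μ ≠ 1/2)
    (lam : ℝ → ℝ)
    (hlam : (fun ε => lam ε - (3*μ^2/4) ^ ((1:ℝ)/3) * ε ^ ((1:ℝ)/3))
      =O[𝓝[>] (0:ℝ)] (fun ε => ε))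
    (hsmall : ∀ᶠ ε in 𝓝[>] (0:ℝ), 0 < lam ε ∧ lam ε < μ)
    (l u r ShT : ℝ → ℝ)
    (hl : l = fun ε => (μ - lam ε)/α)
    (hu : u = fun ε => (μ + lam ε)/((1 - ε)*α))
    (hr : r = fun ε => u ε / l ε)
    (hShT : ShT = fun ε => (σ^2/2) *
      ((1 - 2*μ)/(r ε ^ (1 - 2*μ) - 1) + (2*μ - 1)/(r ε ^ (2*μ - 1) - 1))) :
    (fun ε => ShT ε - (σ^2/2) * μ * (3*μ^2/4) ^ (-(1:ℝ)/3) * ε ^ (-(1:ℝ)/3))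
      =O[𝓝[>] (0:ℝ)] (fun ε => ε ^ ((1:ℝ)/3)) := by
  subst hl hu hr hShT
  have hc : 0 < (3 * μ ^ 2 / 4) ^ ((1 : ℝ) / 3) := by positivity
  have ha : 1 - 2 * μ ≠ 0 := fun h => hμ' (by linarith)
  have hlim := tendsto_div_rpow_one_third_of_isBigO hlam
  have hbracket := (turnoverBracket_one_add_sub_isBigO ha
    (tendsto_relWidth hμ.ne' hlim hsmall)).trans (relWidth_isBigO hμ.ne' hlim)
  have hleading := two_div_relWidth_add_one_sub_isBigO (μ := μ) hc.ne' hlam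
  refine ((hbracket.add hleading).const_mul_left (σ ^ 2 / 2)).congr' ?_ EventuallyEq.rfl
  filter_upwards [self_mem_nhdsWithin, hsmall, Ioo_mem_nhdsGT one_pos]
    with ε (hε : 0 < ε) ⟨_, hlamμ⟩ ⟨_, hε1⟩
  have htarget : (3 * μ ^ 2 / 4) ^ (-(1 : ℝ) / 3) * ε ^ (-(1 : ℝ) / 3)
      = ((3 * μ ^ 2 / 4) ^ ((1 : ℝ) / 3) * ε ^ ((1 : ℝ) / 3))⁻¹ := by
    rw [neg_div, rpow_neg (by positivity), rpow_neg hε.le, mul_inv]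
  rw [div_div_eq_one_add_relWidth hα.ne' hε1.ne hlamμ.ne, turnoverBracket,
    show 2 * μ - 1 = -(1 - 2 * μ) by ring, mul_assoc (σ ^ 2 / 2 * μ), htarget]
  ring

/-- With `r(ε) = u(ε)/l(ε)`, `l = (μ̄-λ̄)/α`,
`u = (μ̄+λ̄)/((1-ε)α)`, and `λ̄(ε) = (3μ̄²/4)^{1/3}ε^{1/3} + O(ε)`, the relative
turnover `ShT(ε) = (σ²/2)[(1-2μ̄)/(r^{1-2μ̄}-1) + (2μ̄-1)/(r^{2μ̄-1}-1)]`
satisfies `ShT(ε) = (σ²/2)μ̄(3μ̄²/4)^{-1/3}ε^{-1/3} + O(ε^{1/3})` as `ε ↓ 0`. -/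
theorem stmt_19 (σ α μ : ℝ) (hσ : 0 < σ) (hα : 0 < α) (hμ : 0 < μ) (hμ' : μ ≠ 1/2)
    (lam : ℝ → ℝ)
    (hlam : (fun ε => lam ε - (3*μ^2/4) ^ ((1:ℝ)/3) * ε ^ ((1:ℝ)/3))
      =O[𝓝[>] (0:ℝ)] (fun ε => ε))
    (hsmall : ∀ᶠ ε in 𝓝[>] (0:ℝ), 0 < lam ε ∧ lam ε < μ)
    (l u r ShT : ℝ → ℝ)
    (hl : l = fun ε => (μ - lam ε)/α)
    (hu : u = fun ε => (μ + lam ε)/((1 - ε)*α))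
    (hr : r = fun ε => u ε / l ε)
    (hShT : ShT = fun ε => (σ^2/2) *
      ((1 - 2*μ)/(r ε ^ (1 - 2*μ) - 1) + (2*μ - 1)/(r ε ^ (2*μ - 1) - 1))) :
    (fun ε => ShT ε - (σ^2/2) * μ * (3*μ^2/4) ^ (-(1:ℝ)/3) * ε ^ (-(1:ℝ)/3))
      =O[𝓝[>] (0:ℝ)] (fun ε => ε ^ ((1:ℝ)/3)) :=
  stmt_19_general σ α μ hα hμ hμ' lam hlam hsmall l u r ShT hl hu hr hShT
end
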